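/- Let R and S be nonnegative real vectors in ℝ^n with equal component sums. There exists an n×n nonnegative real matrix A with row sum vector R and column sum vector S that is invariant under both matrix transposition and transposition about the antidiagonal if and only if (a) R = S and (b) R is palindromic. Moreover, if R and S have nonnegative integer components, such a matrix with nonnegative integer entries exists under the same condition. -/

import Mathlib

/-!
Transposition makes every row sum equal the corresponding column sum, so `R = S`; the
antidiagonal reflection carries row `i` onto column `i.rev`, hence onto row `i.rev`, so `R` is
palindromic. Conversely, for a palindromic `R` the diagonal matrix `diagonal R` is invariant
under both reflections, and it is integral when `R` is.
-/

open Finset Matrix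

namespace Matrix

variable {α : Type*} {n : ℕ}

theorem sum_row_eq_sum_col_of_symm [AddCommMonoid α] {A : Matrix (Fin n) (Fin n) α}
    (hA : ∀ i j, A i j = A j i) (i : Fin n) : ∑ j, A i j = ∑ j, A j i :=
  sum_congr rfl fun j _ => hA i j

theorem sum_row_eq_sum_col_rev_of_antidiag_symm [AddCommMonoid α]
    {A : Matrix (Fin n) (Fin n) α} (hA : ∀ i j, A i j = A j.rev i.rev) (i : Fin n) :
    ∑ j, A i j = ∑ j, A j i.rev := by
  simp_rw [hA i]
  exact Equiv.sum_comp Fin.revPerm fun j => A j i.rev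

theorem sum_row_rev_of_klein_invariant [AddCommMonoid α] {A : Matrix (Fin n) (Fin n) α}
    (hsymm : ∀ i j, A i j = A j i) (hanti : ∀ i j, A i j = A j.rev i.rev) (i : Fin n) :
    ∑ j, A i j = ∑ j, A i.rev j := by
  rw [sum_row_eq_sum_col_rev_of_antidiag_symm hanti, sum_row_eq_sum_col_of_symm hsymm]

theorem diagonal_antidiag_symm [Zero α] {d : Fin n → α} (hd : ∀ i, d i = d i.rev)
    (i j : Fin n) : diagonal d i j = diagonal d j.rev i.rev := by
  by_cases h : i = j
  · subst h
    simp [hd i]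
  · simp [h, Fin.rev_inj, Ne.symm h]

theorem sum_diagonal_row [AddCommMonoid α] (d : Fin n → α) (i : Fin n) :
    ∑ j, diagonal d i j = d i := by
  simp [diagonal_apply]

theorem sum_diagonal_col [AddCommMonoid α] (d : Fin n → α) (j : Fin n) :
    ∑ i, diagonal d i j = d j := by
  simp [diagonal_apply]

end Matrix

theorem klein_diagonal_transportation (n : ℕ) (R S : Fin n → ℝ)
    (hR : ∀ i, 0 ≤ R i) :
    ((∃ A : Matrix (Fin n) (Fin n) ℝ,
        (∀ i j, 0 ≤ A i j) ∧
        (∀ i, ∑ j, A i j = R i) ∧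
        (∀ j, ∑ i, A i j = S j) ∧
        (∀ i j, A i j = A j i) ∧
        (∀ i j, A i j = A j.rev i.rev)) ↔
      (R = S ∧ ∀ i, R i = R i.rev))
    ∧ ((∀ i, ∃ k : ℕ, R i = k) → (∀ j, ∃ k : ℕ, S j = k) →
      ((∃ A : Matrix (Fin n) (Fin n) ℕ,
          (∀ i, ((∑ j, A i j : ℕ) : ℝ) = R i) ∧
          (∀ j, ((∑ i, A i j : ℕ) : ℝ) = S j) ∧
          (∀ i j, A i j = A j i) ∧
          (∀ i j, A i j = A j.rev i.rev)) ↔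
        (R = S ∧ ∀ i, R i = R i.rev))) := by
  refine ⟨⟨?_, ?_⟩, fun hRk _ => ⟨?_, ?_⟩⟩
  · rintro ⟨A, -, hrow, hcol, hsymm, hanti⟩
    refine ⟨funext fun i => ?_, fun i => ?_⟩
    · rw [← hrow, ← hcol, sum_row_eq_sum_col_of_symm hsymm]
    · rw [← hrow, ← hrow, sum_row_rev_of_klein_invariant hsymm hanti]
  · rintro ⟨rfl, hpal⟩
    refine ⟨diagonal R, fun i j => ?_, sum_diagonal_row R, sum_diagonal_col R,
      fun i j => (isSymm_diagonal R).apply j i, diagonal_antidiag_symm hpal⟩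
    by_cases h : i = j <;> simp [h, hR]
  · rintro ⟨A, hrow, hcol, hsymm, hanti⟩
    refine ⟨funext fun i => ?_, fun i => ?_⟩
    · rw [← hrow, ← hcol, sum_row_eq_sum_col_of_symm hsymm]
    · rw [← hrow, ← hrow, sum_row_rev_of_klein_invariant hsymm hanti]
  · rintro ⟨rfl, hpal⟩
    choose m hm using hRk
    have hmpal (i : Fin n) : m i = m i.rev := by
      exact_mod_cast (hm i).symm.trans ((hpal i).trans (hm i.rev))
    refine ⟨diagonal m, fun i => ?_, fun j => ?_,
      fun i j => (isSymm_diagonal m).apply j i, diagonal_antidiag_symm hmpal⟩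
    · rw [sum_diagonal_row, hm]
    · rw [sum_diagonal_col, hm]
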